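/- arXiv:1711.03768 — 6 statements merged into one kernel-verified Lean document; each statement's English description precedes it below -/
import Mathlib

section
/- Let ω be a positive integer and u : ℝ≥0 → X a bounded continuous S-asymptotically ω-periodic function with values in a Banach space X. Then the step function v(t) = u(⌊t⌋) is S-asymptotically ω-periodic in the Stepanov sense with exponent p ≥ 1, i.e., lim_{t→∞} ∫_t^{t+1} ‖v(s+ω) - v(s)‖^p ds = 0. -/
open Filter MeasureTheory Topology

theorem tendsto_intervalIntegral_add_of_tendsto_zero {E : Type*} [NormedAddCommGroup E]
    [NormedSpace ℝ E] {f : ℝ → E} (hf : Tendsto f atTop (𝓝 0)) (a : ℝ) :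
    Tendsto (fun t => ∫ s in t..t + a, f s) atTop (𝓝 0) := by
  rw [NormedAddGroup.tendsto_nhds_zero]
  intro ε hε
  set δ := ε / (|a| + 1)
  have hδ : δ * |a| < ε := by
    rw [div_mul_eq_mul_div, div_lt_iff₀ (by positivity)]
    nlinarith [abs_nonneg a]
  have hsmall : ∀ᶠ t in atTop, ∀ s ≥ t - |a|, ‖f s‖ ≤ δ :=
    (tendsto_atTop_add_const_right _ (-|a|) tendsto_id).eventually <|
      eventually_forall_ge_atTop.2 <|
        (NormedAddGroup.tendsto_nhds_zero.1 hf δ (by positivity)).mono fun _ h => h.le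
  filter_upwards [hsmall] with t ht
  have hwindow : t - |a| ≤ min t (t + a) :=
    le_min (by linarith [abs_nonneg a]) (by linarith [neg_abs_le a])
  calc ‖∫ s in t..t + a, f s‖ ≤ δ * |t + a - t| :=
        intervalIntegral.norm_integral_le_of_norm_le_const fun s hs =>
          ht s (hwindow.trans hs.1.le)
    _ < ε := by rwa [add_sub_cancel_left]

theorem stmt1_general {X : Type*} [NormedAddCommGroup X]
    (u : ℝ → X) (ω : ℕ) (p : ℝ) (hp : 1 ≤ p)
    (hsap : Tendsto (fun t : ℝ => u (t + (ω : ℝ)) - u t) atTop (nhds 0)) :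
    Tendsto (fun t : ℝ =>
        ∫ s in t..(t + 1),
          ‖u ((⌊s + (ω : ℝ)⌋ : ℤ) : ℝ) - u ((⌊s⌋ : ℤ) : ℝ)‖ ^ p)
      atTop (nhds 0) := by
  have hfloor : Tendsto (fun s : ℝ => ((⌊s⌋ : ℤ) : ℝ)) atTop atTop :=
    tendsto_intCast_atTop_atTop.comp tendsto_floor_atTop
  have hstep := (tendsto_zero_iff_norm_tendsto_zero.1 (hsap.comp hfloor)).rpow_const_nhds_zero
    (zero_lt_one.trans_le hp)
  simp_rw [Int.floor_add_natCast, Int.cast_add, Int.cast_natCast]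
  exact tendsto_intervalIntegral_add_of_tendsto_zero hstep 1

theorem stmt1 {X : Type*} [NormedAddCommGroup X] [NormedSpace ℝ X] [CompleteSpace X]
    (u : ℝ → X) (ω : ℕ) (hω : 1 ≤ ω) (p : ℝ) (hp : 1 ≤ p)
    (hbdd : ∃ C : ℝ, ∀ t : ℝ, 0 ≤ t → ‖u t‖ ≤ C)
    (hcont : ContinuousOn u (Set.Ici (0 : ℝ)))
    (hsap : Tendsto (fun t : ℝ => u (t + (ω : ℝ)) - u t) atTop (nhds 0)) :
    Tendsto (fun t : ℝ =>
        ∫ s in t..(t + 1),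
          ‖u ((⌊s + (ω : ℝ)⌋ : ℤ) : ℝ) - u ((⌊s⌋ : ℤ) : ℝ)‖ ^ p)
      atTop (nhds 0) :=
  stmt1_general u ω p hp hsap
end

section
/- Let ω be a positive integer, and let f : ℝ≥0 × X → X be uniformly S-asymptotically ω-periodic on bounded sets (i.e., for every bounded set K ⊂ X, {f(t,x) : t ≥ 0, x ∈ K} is bounded and f(t+ω,x) - f(t,x) → 0 as t → ∞ uniformly in x ∈ K) and satisfy a global Lipschitz condition ‖f(t,x) - f(t,y)‖ ≤ L‖x-y‖ for all t ≥ 0, x, y ∈ X. If u : ℝ≥0 → X is bounded continuous S-asymptotically ω-periodic, then lim_{t→∞} (f(t+ω, u(⌊t+ω⌋)) - f(t, u(⌊t⌋))) = 0. -/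
open Filter MeasureTheory

/-!
Split the difference at the intermediate point `f (t + ω) (u ⌊t⌋)`, using `⌊t + ω⌋ = ⌊t⌋ + ω`.
The first part is controlled by the Lipschitz constant times `‖u (⌊t⌋ + ω) - u ⌊t⌋‖`, which
tends to zero because `⌊t⌋ → ∞`. The second part tends to zero because `u ⌊t⌋` stays in a fixed
ball, on which `f (t + ω) x - f t x → 0` uniformly.
-/

section

variable {ι α E F : Type*} {l : Filter ι}

theorem tendsto_apply_of_eventually_forall_norm_le [SeminormedAddCommGroup E]
    {G : ι → α → E} {K : Set α} {v : ι → α}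
    (hG : ∀ ε > (0 : ℝ), ∀ᶠ i in l, ∀ x ∈ K, ‖G i x‖ ≤ ε) (hv : ∀ᶠ i in l, v i ∈ K) :
    Tendsto (fun i => G i (v i)) l (nhds 0) := by
  rw [NormedAddGroup.tendsto_nhds_zero]
  intro ε hε
  filter_upwards [hG (ε / 2) (half_pos hε), hv] with i hGi hvi
  exact (hGi _ hvi).trans_lt (half_lt_self hε)

theorem tendsto_sub_apply_of_lipschitz [SeminormedAddCommGroup E] [SeminormedAddCommGroup F]
    {G : ι → E → F} {L : ℝ} {v w : ι → E}
    (hG : ∀ᶠ i in l, ∀ x y, ‖G i x - G i y‖ ≤ L * ‖x - y‖)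
    (hvw : Tendsto (fun i => v i - w i) l (nhds 0)) :
    Tendsto (fun i => G i (v i) - G i (w i)) l (nhds 0) := by
  have hbound : Tendsto (fun i => L * ‖v i - w i‖) l (nhds 0) := by
    simpa using (tendsto_norm_zero.comp hvw).const_mul L
  exact squeeze_zero_norm' (hG.mono fun i hi => hi _ _) hbound

end

theorem intCast_floor_add_natCast (t : ℝ) (n : ℕ) :
    ((⌊t + n⌋ : ℤ) : ℝ) = ⌊t⌋ + n := by
  rw [Int.floor_add_natCast, Int.cast_add, Int.cast_natCast]

theorem stmt3_general {X : Type*} [NormedAddCommGroup X]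
    (f : ℝ → X → X) (ω : ℕ) (L : ℝ)
    (husap : ∀ K : Set X, Bornology.IsBounded K →
      (∃ C : ℝ, ∀ t : ℝ, 0 ≤ t → ∀ x ∈ K, ‖f t x‖ ≤ C) ∧
      (∀ ε > (0 : ℝ), ∃ T : ℝ, ∀ t ≥ T, ∀ x ∈ K,
        ‖f (t + (ω : ℝ)) x - f t x‖ ≤ ε))
    (hlip : ∀ t : ℝ, 0 ≤ t → ∀ x y : X, ‖f t x - f t y‖ ≤ L * ‖x - y‖)
    (u : ℝ → X)
    (hbdd : ∃ C : ℝ, ∀ t : ℝ, 0 ≤ t → ‖u t‖ ≤ C)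
    (hsap : Tendsto (fun t : ℝ => u (t + (ω : ℝ)) - u t) atTop (nhds 0)) :
    Tendsto (fun t : ℝ =>
        f (t + (ω : ℝ)) (u ((⌊t + (ω : ℝ)⌋ : ℤ) : ℝ)) - f t (u ((⌊t⌋ : ℤ) : ℝ)))
      atTop (nhds 0) := by
  obtain ⟨C, hC⟩ := hbdd
  have hfloor : Tendsto (fun t : ℝ => ((⌊t⌋ : ℤ) : ℝ)) atTop atTop :=
    tendsto_intCast_atTop_atTop.comp tendsto_floor_atTop
  have hlipPart : Tendsto (fun t : ℝ =>
      f (t + ω) (u (⌊t⌋ + ω)) - f (t + ω) (u ⌊t⌋)) atTop (nhds 0) :=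
    tendsto_sub_apply_of_lipschitz
      ((eventually_ge_atTop 0).mono fun t ht => hlip _ (by positivity)) (hsap.comp hfloor)
  have hperPart : Tendsto (fun t : ℝ => f (t + ω) (u ⌊t⌋) - f t (u ⌊t⌋)) atTop (nhds 0) := by
    refine tendsto_apply_of_eventually_forall_norm_le (G := fun t x => f (t + ω) x - f t x)
      (K := Metric.closedBall 0 C)
      (fun ε hε => eventually_atTop.mpr ((husap _ Metric.isBounded_closedBall).2 ε hε)) ?_
    filter_upwards [hfloor.eventually_ge_atTop 0] with t ht
    simpa using hC _ ht
  simpa only [intCast_floor_add_natCast, sub_add_sub_cancel, add_zero] using hlipPart.add hperPart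

theorem stmt3 {X : Type*} [NormedAddCommGroup X] [NormedSpace ℝ X] [CompleteSpace X]
    (f : ℝ → X → X) (ω : ℕ) (hω : 1 ≤ ω) (L : ℝ) (hL : 0 < L)
    (husap : ∀ K : Set X, Bornology.IsBounded K →
      (∃ C : ℝ, ∀ t : ℝ, 0 ≤ t → ∀ x ∈ K, ‖f t x‖ ≤ C) ∧
      (∀ ε > (0 : ℝ), ∃ T : ℝ, ∀ t ≥ T, ∀ x ∈ K,
        ‖f (t + (ω : ℝ)) x - f t x‖ ≤ ε))
    (hlip : ∀ t : ℝ, 0 ≤ t → ∀ x y : X, ‖f t x - f t y‖ ≤ L * ‖x - y‖)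
    (u : ℝ → X)
    (hbdd : ∃ C : ℝ, ∀ t : ℝ, 0 ≤ t → ‖u t‖ ≤ C)
    (hcont : ContinuousOn u (Set.Ici (0 : ℝ)))
    (hsap : Tendsto (fun t : ℝ => u (t + (ω : ℝ)) - u t) atTop (nhds 0)) :
    Tendsto (fun t : ℝ =>
        f (t + (ω : ℝ)) (u ((⌊t + (ω : ℝ)⌋ : ℤ) : ℝ)) - f t (u ((⌊t⌋ : ℤ) : ℝ)))
      atTop (nhds 0) :=
  stmt3_general f ω L husap hlip u hbdd hsap
end

section
/- Let (U(t,s))_{t≥s≥0} be an exponentially stable evolutionary process on a Banach space X with ‖U(t,s)‖ ≤ M e^{-a(t-s)} for constants M > 0, a > 0, and let f ∈ BS^p(ℝ≥0, X) with p ≥ 1. Then the function u(t) = ∫_0^t U(t,s) f(s) ds is bounded, with ‖u(t)‖ ≤ M (2 - e^{-a})/(1 - e^{-a}) · ‖f‖_{S^p} for all t ≥ 0. -/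
open Filter MeasureTheory

/-!
Bounding `‖U t s‖` by `M e^{-a(t-s)}` reduces the claim to the scalar convolution
`w r = ∫_0^r e^{-a(r-s)} ‖f s‖ ds`. Hölder's inequality on unit intervals gives
`∫_c^{c+1} ‖f‖ ≤ ‖f‖_{S^p}`, and splitting off the last unit interval gives
`w r ≤ e^{-a} w (r - 1) + ‖f‖_{S^p}`, so by induction `w ≤ ‖f‖_{S^p} / (1 - e^{-a})`,
which is at most `(2 - e^{-a}) / (1 - e^{-a}) · ‖f‖_{S^p}`.
-/

section Lp

variable {α E : Type*} [MeasurableSpace α] {μ : Measure α} [NormedAddCommGroup E]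
  {f : α → E} {p : ℝ}

lemma integrable_of_integrable_norm_rpow [IsFiniteMeasure μ] (hp : 1 ≤ p)
    (hf : AEStronglyMeasurable f μ) (hfp : Integrable (fun x => ‖f x‖ ^ p) μ) :
    Integrable f μ := by
  have hmem : MemLp f (ENNReal.ofReal p) μ := by
    rw [← integrable_norm_rpow_iff hf (ENNReal.ofReal_pos.mpr (by linarith)).ne'
      ENNReal.ofReal_ne_top,
      ENNReal.toReal_ofReal (by linarith)]
    exact hfp
  exact memLp_one_iff_integrable.mp (hmem.mono_exponent (by simpa using hp))

lemma integral_norm_le_integral_norm_rpow_rpow [IsProbabilityMeasure μ] (hp : 1 ≤ p)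
    (hf : AEStronglyMeasurable f μ) (hfp : Integrable (fun x => ‖f x‖ ^ p) μ) :
    ∫ x, ‖f x‖ ∂μ ≤ (∫ x, ‖f x‖ ^ p ∂μ) ^ (1 / p) := by
  rcases hp.eq_or_lt with rfl | hp1
  · simp
  have hmem : MemLp (fun x => ‖f x‖) (ENNReal.ofReal p) μ := by
    rw [← integrable_norm_rpow_iff hf.norm (ENNReal.ofReal_pos.mpr (by linarith)).ne'
      ENNReal.ofReal_ne_top,
      ENNReal.toReal_ofReal (by linarith)]
    simpa using hfp
  simpa using integral_mul_le_Lp_mul_Lq_of_nonneg (Real.HolderConjugate.conjExponent hp1)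
    (ae_of_all _ fun x => norm_nonneg (f x)) (ae_of_all _ fun _ => zero_le_one)
    hmem (memLp_const (1 : ℝ))

end Lp

section UnitInterval

variable {E : Type*} [NormedAddCommGroup E] {f : ℝ → E} {p c : ℝ}

instance isProbabilityMeasure_restrict_Ioc_add_one (c : ℝ) :
    IsProbabilityMeasure (volume.restrict (Set.Ioc c (c + 1))) :=
  ⟨by simp⟩

lemma intervalIntegrable_of_intervalIntegrable_norm_rpow (hp : 1 ≤ p)
    (hf : AEStronglyMeasurable f) (hfp : IntervalIntegrable (fun s => ‖f s‖ ^ p) volume c (c + 1)) :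
    IntervalIntegrable f volume c (c + 1) :=
  (intervalIntegrable_iff_integrableOn_Ioc_of_le (by linarith)).mpr
    (integrable_of_integrable_norm_rpow hp hf.restrict hfp.1)

lemma integral_norm_le_integral_norm_rpow_rpow_of_add_one (hp : 1 ≤ p)
    (hf : AEStronglyMeasurable f) (hfp : IntervalIntegrable (fun s => ‖f s‖ ^ p) volume c (c + 1)) :
    ∫ s in c..c + 1, ‖f s‖ ≤ (∫ s in c..c + 1, ‖f s‖ ^ p) ^ (1 / p) := by
  simp only [intervalIntegral.integral_of_le (by linarith : c ≤ c + 1)]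
  exact integral_norm_le_integral_norm_rpow_rpow hp hf.restrict hfp.1

end UnitInterval

section ExpConvolution

variable {φ : ℝ → ℝ} {a S : ℝ}

lemma intervalIntegrable_zero_of_unit_intervals
    (hφ : ∀ c, 0 ≤ c → IntervalIntegrable φ volume c (c + 1)) {r : ℝ} (hr : 0 ≤ r) :
    IntervalIntegrable φ volume 0 r := by
  have hnat : ∀ n : ℕ, IntervalIntegrable φ volume 0 n := by
    intro n
    induction n with
    | zero => simp
    | succ n ih => exact_mod_cast ih.trans (hφ n n.cast_nonneg)
  refine (hnat ⌈r⌉₊).mono_set ?_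
  rw [Set.uIcc_of_le hr, Set.uIcc_of_le (Nat.cast_nonneg _)]
  exact Set.Icc_subset_Icc le_rfl (Nat.le_ceil r)

lemma integral_exp_mul_le_of_le_add_one (hφ0 : ∀ s, 0 ≤ φ s)
    (hφ : ∀ c, 0 ≤ c → IntervalIntegrable φ volume c (c + 1))
    (hφS : ∀ c, 0 ≤ c → ∫ s in c..c + 1, φ s ≤ S) (ha : 0 ≤ a)
    {u r : ℝ} (hu : 0 ≤ u) (hur : u ≤ r) (hru : r ≤ u + 1) :
    ∫ s in u..r, Real.exp (-a * (r - s)) * φ s ≤ S := by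
  have hφur : IntervalIntegrable φ volume u r := (hφ u hu).mono_set <| by
    rw [Set.uIcc_of_le hur, Set.uIcc_of_le (by linarith)]
    exact Set.Icc_subset_Icc le_rfl hru
  calc ∫ s in u..r, Real.exp (-a * (r - s)) * φ s
      ≤ ∫ s in u..r, φ s := by
        refine intervalIntegral.integral_mono_on hur
          (hφur.continuousOn_mul (by fun_prop)) hφur fun s hs => ?_
        have : Real.exp (-a * (r - s)) ≤ 1 := Real.exp_le_one_iff.mpr (by nlinarith [hs.2])
        nlinarith [hφ0 s]
    _ ≤ ∫ s in u..u + 1, φ s :=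
        intervalIntegral.integral_mono_interval le_rfl hur hru (ae_of_all _ hφ0) (hφ u hu)
    _ ≤ S := hφS u hu

lemma integral_exp_mul_eq_exp_mul_add (hφ : ∀ c, 0 ≤ c → IntervalIntegrable φ volume c (c + 1))
    {r : ℝ} (hr : 1 ≤ r) :
    ∫ s in (0 : ℝ)..r, Real.exp (-a * (r - s)) * φ s =
      Real.exp (-a) * (∫ s in (0 : ℝ)..r - 1, Real.exp (-a * (r - 1 - s)) * φ s) +
        ∫ s in r - 1..r, Real.exp (-a * (r - s)) * φ s := by
  have hlast : IntervalIntegrable φ volume (r - 1) r := by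
    simpa using hφ (r - 1) (by linarith)
  rw [← intervalIntegral.integral_add_adjacent_intervals
    ((intervalIntegrable_zero_of_unit_intervals hφ (by linarith)).continuousOn_mul
      (by fun_prop))
    (hlast.continuousOn_mul (by fun_prop))]
  congr 1
  rw [← intervalIntegral.integral_const_mul]
  congr 1 with s
  rw [← mul_assoc, ← Real.exp_add]
  ring_nf

lemma integral_exp_mul_le_div (hφ0 : ∀ s, 0 ≤ φ s)
    (hφ : ∀ c, 0 ≤ c → IntervalIntegrable φ volume c (c + 1))
    (hφS : ∀ c, 0 ≤ c → ∫ s in c..c + 1, φ s ≤ S) (ha : 0 < a) {r : ℝ} (hr : 0 ≤ r) :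
    ∫ s in (0 : ℝ)..r, Real.exp (-a * (r - s)) * φ s ≤ S / (1 - Real.exp (-a)) := by
  have hq : Real.exp (-a) < 1 := Real.exp_lt_one_iff.mpr (by linarith)
  have hS : 0 ≤ S := (intervalIntegral.integral_nonneg (by linarith) fun s _ => hφ0 s).trans
    (hφS 0 le_rfl)
  have hSle : S ≤ S / (1 - Real.exp (-a)) :=
    le_div_self hS (by linarith) (by linarith [Real.exp_pos (-a)])
  have base : ∀ r, 0 ≤ r → r ≤ 1 →
      ∫ s in (0 : ℝ)..r, Real.exp (-a * (r - s)) * φ s ≤ S / (1 - Real.exp (-a)) :=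
    fun r hr hr1 => (integral_exp_mul_le_of_le_add_one hφ0 hφ hφS ha.le le_rfl hr
      (by linarith)).trans hSle
  have step : ∀ r, 1 ≤ r →
      ∫ s in (0 : ℝ)..r - 1, Real.exp (-a * (r - 1 - s)) * φ s ≤ S / (1 - Real.exp (-a)) →
      ∫ s in (0 : ℝ)..r, Real.exp (-a * (r - s)) * φ s ≤ S / (1 - Real.exp (-a)) := by
    intro r hr ih
    rw [integral_exp_mul_eq_exp_mul_add hφ hr]
    have hlast := integral_exp_mul_le_of_le_add_one hφ0 hφ hφS ha.le
      (u := r - 1) (r := r) (by linarith) (by linarith) (by linarith)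
    have hfix : Real.exp (-a) * (S / (1 - Real.exp (-a))) + S = S / (1 - Real.exp (-a)) := by
      field_simp [(by linarith : 1 - Real.exp (-a) ≠ 0)]
      ring
    linarith [mul_le_mul_of_nonneg_left ih (Real.exp_pos (-a)).le]
  have hnat : ∀ n : ℕ, ∀ r : ℝ, 0 ≤ r → r ≤ n + 1 →
      ∫ s in (0 : ℝ)..r, Real.exp (-a * (r - s)) * φ s ≤ S / (1 - Real.exp (-a)) := by
    intro n
    induction n with
    | zero => exact fun r hr hr1 => base r hr (by simpa using hr1)
    | succ n ih =>
      intro r hr hrn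
      rcases le_or_gt r 1 with hr1 | hr1
      · exact base r hr hr1
      · exact step r hr1.le (ih (r - 1) (by linarith) (by push_cast at hrn; linarith))
  exact hnat ⌈r⌉₊ r hr (by linarith [Nat.le_ceil r])

end ExpConvolution

theorem stmt6_general {X : Type*} [NormedAddCommGroup X] [NormedSpace ℝ X]
    (U : ℝ → ℝ → X →L[ℝ] X) (M a : ℝ) (hM : 0 < M) (ha : 0 < a)
    (hbound : ∀ t s : ℝ, 0 ≤ s → s ≤ t → ‖U t s‖ ≤ M * Real.exp (-a * (t - s)))
    (p : ℝ) (hp : 1 ≤ p) (f : ℝ → X) (hmeas : MeasureTheory.StronglyMeasurable f)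
    (hint : ∀ t : ℝ, 0 ≤ t → IntervalIntegrable (fun s => ‖f s‖ ^ p) volume t (t + 1))
    (Sp : ℝ) (hSp : ∀ t : ℝ, 0 ≤ t → (∫ s in t..(t + 1), ‖f s‖ ^ p) ^ (1 / p) ≤ Sp) :
    ∀ t : ℝ, 0 ≤ t →
      ‖∫ s in (0 : ℝ)..t, U t s (f s)‖ ≤
        M * ((2 - Real.exp (-a)) / (1 - Real.exp (-a))) * Sp := by
  intro t ht
  have hq : Real.exp (-a) < 1 := Real.exp_lt_one_iff.mpr (by linarith)
  have hf : ∀ c, 0 ≤ c → IntervalIntegrable (fun s => ‖f s‖) volume c (c + 1) := fun c hc =>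
    (intervalIntegrable_of_intervalIntegrable_norm_rpow hp hmeas.aestronglyMeasurable
      (hint c hc)).norm
  have hfSp : ∀ c, 0 ≤ c → ∫ s in c..c + 1, ‖f s‖ ≤ Sp := fun c hc =>
    (integral_norm_le_integral_norm_rpow_rpow_of_add_one hp hmeas.aestronglyMeasurable
      (hint c hc)).trans (hSp c hc)
  have hSp0 : 0 ≤ Sp := (intervalIntegral.integral_nonneg zero_le_one fun s _ =>
    norm_nonneg (f s)).trans (by simpa using hfSp 0 le_rfl)
  calc ‖∫ s in (0 : ℝ)..t, U t s (f s)‖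
      ≤ ∫ s in (0 : ℝ)..t, M * (Real.exp (-a * (t - s)) * ‖f s‖) := by
        refine intervalIntegral.norm_integral_le_of_norm_le ht (ae_of_all _ fun s hs => ?_)
          (((intervalIntegrable_zero_of_unit_intervals hf ht).continuousOn_mul
            (by fun_prop)).const_mul M)
        rw [← mul_assoc]
        exact (U t s).le_of_opNorm_le (hbound t s hs.1.le hs.2) (f s)
    _ = M * ∫ s in (0 : ℝ)..t, Real.exp (-a * (t - s)) * ‖f s‖ :=
        intervalIntegral.integral_const_mul M _
    _ ≤ M * (Sp / (1 - Real.exp (-a))) := by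
        gcongr
        exact integral_exp_mul_le_div (fun s => norm_nonneg (f s)) hf hfSp ha ht
    _ ≤ M * ((2 - Real.exp (-a)) / (1 - Real.exp (-a))) * Sp := by
        rw [mul_assoc, div_mul_eq_mul_div]
        gcongr
        nlinarith [Real.exp_pos (-a)]

theorem stmt6 {X : Type*} [NormedAddCommGroup X] [NormedSpace ℝ X] [CompleteSpace X]
    (U : ℝ → ℝ → X →L[ℝ] X) (M a : ℝ) (hM : 0 < M) (ha : 0 < a)
    (hid : ∀ t : ℝ, 0 ≤ t → U t t = ContinuousLinearMap.id ℝ X)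
    (hcomp : ∀ t s r : ℝ, 0 ≤ r → r ≤ s → s ≤ t → (U t s).comp (U s r) = U t r)
    (hUcont : ∀ x : X, Continuous (fun q : ℝ × ℝ => U q.1 q.2 x))
    (hbound : ∀ t s : ℝ, 0 ≤ s → s ≤ t → ‖U t s‖ ≤ M * Real.exp (-a * (t - s)))
    (p : ℝ) (hp : 1 ≤ p) (f : ℝ → X) (hmeas : MeasureTheory.StronglyMeasurable f)
    (hintU : ∀ t : ℝ, 0 ≤ t → IntervalIntegrable (fun s => U t s (f s)) volume 0 t)
    (hint : ∀ t : ℝ, 0 ≤ t → IntervalIntegrable (fun s => ‖f s‖ ^ p) volume t (t + 1))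
    (Sp : ℝ) (hSp : ∀ t : ℝ, 0 ≤ t → (∫ s in t..(t + 1), ‖f s‖ ^ p) ^ (1 / p) ≤ Sp) :
    ∀ t : ℝ, 0 ≤ t →
      ‖∫ s in (0 : ℝ)..t, U t s (f s)‖ ≤
        M * ((2 - Real.exp (-a)) / (1 - Real.exp (-a))) * Sp :=
  stmt6_general U M a hM ha hbound p hp f hmeas hint Sp hSp
end

section
/- The operator Γ defined on the space SAP_ω(ℝ≥0, X) of bounded continuous S-asymptotically ω-periodic functions by (Γφ)(t) = U(t,0)c₀ + ∫_0^t U(t,s) f(s, φ(⌊s⌋)) ds satisfies the contraction estimate ‖Γφ - Γψ‖_∞ ≤ (LM/a) ‖φ - ψ‖_∞ for all φ, ψ ∈ SAP_ω(ℝ≥0, X), where ‖U(t,s)‖ ≤ M e^{-a(t-s)} and f is L-Lipschitz in its second variable. -/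
/-!
The terms `U t 0 c₀` cancel. By the Lipschitz bound, the integrands of the two Duhamel integrals
differ at time `s` by at most `M e^{-a(t-s)} · L C`, and `∫₀ᵗ e^{-a(t-s)} ds = (1 - e^{-at}) / a ≤ 1 / a`.
-/

open Filter MeasureTheory

theorem integral_exp_neg_mul_sub {a : ℝ} (ha : a ≠ 0) (r t : ℝ) :
    ∫ s in r..t, Real.exp (-a * (t - s)) = (1 - Real.exp (-a * (t - r))) / a := by
  have hderiv : ∀ s, HasDerivAt (fun s => Real.exp (-a * (t - s)) / a)
      (Real.exp (-a * (t - s))) s := by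
    intro s
    refine ((((hasDerivAt_id s).const_sub t).const_mul (-a)).exp.div_const a).congr_deriv ?_
    simp only [id]
    field_simp
  rw [intervalIntegral.integral_eq_sub_of_hasDerivAt (fun s _ => hderiv s)
    (Continuous.intervalIntegrable (by fun_prop) _ _)]
  simp only [sub_self, mul_zero, Real.exp_zero]
  ring

theorem integral_exp_neg_mul_sub_le_inv {a r t : ℝ} (ha : 0 < a) :
    ∫ s in r..t, Real.exp (-a * (t - s)) ≤ a⁻¹ := by
  rw [integral_exp_neg_mul_sub ha.ne', div_le_iff₀ ha, inv_mul_cancel₀ ha.ne']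
  linarith [Real.exp_pos (-a * (t - r))]

section

variable {X : Type*} [NormedAddCommGroup X] [NormedSpace ℝ X]

theorem norm_integral_sub_integral_le_of_exp_bound (U : ℝ → ℝ → X →L[ℝ] X)
    {M a K t : ℝ} (hM : 0 ≤ M) (ha : 0 < a) (hK : 0 ≤ K) (ht : 0 ≤ t)
    (hU : ∀ s, 0 ≤ s → s ≤ t → ‖U t s‖ ≤ M * Real.exp (-a * (t - s)))
    {g h : ℝ → X} (hg : IntervalIntegrable (fun s => U t s (g s)) volume 0 t)
    (hh : IntervalIntegrable (fun s => U t s (h s)) volume 0 t)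
    (hgh : ∀ s, 0 ≤ s → s ≤ t → ‖g s - h s‖ ≤ K) :
    ‖(∫ s in (0 : ℝ)..t, U t s (g s)) - ∫ s in (0 : ℝ)..t, U t s (h s)‖ ≤ M * K / a := by
  have hpointwise : ∀ s ∈ Set.Ioc 0 t,
      ‖U t s (g s) - U t s (h s)‖ ≤ M * K * Real.exp (-a * (t - s)) := fun s hs =>
    calc ‖U t s (g s) - U t s (h s)‖
        = ‖U t s (g s - h s)‖ := by rw [map_sub]
      _ ≤ ‖U t s‖ * ‖g s - h s‖ := (U t s).le_opNorm _
      _ ≤ M * Real.exp (-a * (t - s)) * K :=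
          mul_le_mul (hU s hs.1.le hs.2) (hgh s hs.1.le hs.2) (norm_nonneg _) (by positivity)
      _ = M * K * Real.exp (-a * (t - s)) := by ring
  calc ‖(∫ s in (0 : ℝ)..t, U t s (g s)) - ∫ s in (0 : ℝ)..t, U t s (h s)‖
      = ‖∫ s in (0 : ℝ)..t, (U t s (g s) - U t s (h s))‖ := by
        rw [intervalIntegral.integral_sub hg hh]
    _ ≤ ∫ s in (0 : ℝ)..t, M * K * Real.exp (-a * (t - s)) :=
        intervalIntegral.norm_integral_le_of_norm_le ht
          (Eventually.of_forall hpointwise)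
          (Continuous.intervalIntegrable (by fun_prop) _ _)
    _ ≤ M * K * a⁻¹ := by
        rw [intervalIntegral.integral_const_mul]
        exact mul_le_mul_of_nonneg_left (integral_exp_neg_mul_sub_le_inv ha) (by positivity)
    _ = M * K / a := by ring

end

theorem stmt10_general {X : Type*} [NormedAddCommGroup X] [NormedSpace ℝ X]
    (U : ℝ → ℝ → X →L[ℝ] X) (M a L : ℝ)
    (hM : 0 < M) (ha : 0 < a) (hL : 0 < L)
    (hbound : ∀ t s : ℝ, 0 ≤ s → s ≤ t → ‖U t s‖ ≤ M * Real.exp (-a * (t - s)))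
    (f : ℝ → X → X)
    (hlip : ∀ t : ℝ, 0 ≤ t → ∀ x y : X, ‖f t x - f t y‖ ≤ L * ‖x - y‖)
    (c₀ : X) (φ ψ : ℝ → X)
    (hintφ : ∀ t : ℝ, 0 ≤ t →
      IntervalIntegrable (fun s => U t s (f s (φ ((⌊s⌋ : ℤ) : ℝ)))) volume 0 t)
    (hintψ : ∀ t : ℝ, 0 ≤ t →
      IntervalIntegrable (fun s => U t s (f s (ψ ((⌊s⌋ : ℤ) : ℝ)))) volume 0 t)
    (C : ℝ) (hC : ∀ s : ℝ, 0 ≤ s → ‖φ s - ψ s‖ ≤ C) :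
    ∀ t : ℝ, 0 ≤ t →
      ‖(U t 0 c₀ + ∫ s in (0 : ℝ)..t, U t s (f s (φ ((⌊s⌋ : ℤ) : ℝ)))) -
          (U t 0 c₀ + ∫ s in (0 : ℝ)..t, U t s (f s (ψ ((⌊s⌋ : ℤ) : ℝ))))‖ ≤
        L * M / a * C := by
  intro t ht
  have hC0 : 0 ≤ C := (norm_nonneg _).trans (hC 0 le_rfl)
  have hf : ∀ s, 0 ≤ s → s ≤ t →
      ‖f s (φ ((⌊s⌋ : ℤ) : ℝ)) - f s (ψ ((⌊s⌋ : ℤ) : ℝ))‖ ≤ L * C := fun s hs _ =>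
    (hlip s hs _ _).trans <| mul_le_mul_of_nonneg_left
      (hC _ (by exact_mod_cast Int.floor_nonneg.mpr hs)) hL.le
  rw [add_sub_add_left_eq_sub]
  calc _ ≤ M * (L * C) / a := norm_integral_sub_integral_le_of_exp_bound U hM.le ha
          (by positivity) ht (hbound t) (hintφ t ht) (hintψ t ht) hf
    _ = L * M / a * C := by ring

theorem stmt10 {X : Type*} [NormedAddCommGroup X] [NormedSpace ℝ X] [CompleteSpace X]
    (U : ℝ → ℝ → X →L[ℝ] X) (M a L : ℝ) (ω : ℝ) (hω : 0 < ω)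
    (hM : 0 < M) (ha : 0 < a) (hL : 0 < L)
    (hbound : ∀ t s : ℝ, 0 ≤ s → s ≤ t → ‖U t s‖ ≤ M * Real.exp (-a * (t - s)))
    (f : ℝ → X → X)
    (hlip : ∀ t : ℝ, 0 ≤ t → ∀ x y : X, ‖f t x - f t y‖ ≤ L * ‖x - y‖)
    (c₀ : X) (φ ψ : ℝ → X)
    -- φ, ψ ∈ SAP_ω(ℝ≥0, X)
    (hφ : ContinuousOn φ (Set.Ici (0 : ℝ)) ∧ (∃ C : ℝ, ∀ t : ℝ, 0 ≤ t → ‖φ t‖ ≤ C) ∧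
      Tendsto (fun t : ℝ => φ (t + ω) - φ t) atTop (nhds 0))
    (hψ : ContinuousOn ψ (Set.Ici (0 : ℝ)) ∧ (∃ C : ℝ, ∀ t : ℝ, 0 ≤ t → ‖ψ t‖ ≤ C) ∧
      Tendsto (fun t : ℝ => ψ (t + ω) - ψ t) atTop (nhds 0))
    (hintφ : ∀ t : ℝ, 0 ≤ t →
      IntervalIntegrable (fun s => U t s (f s (φ ((⌊s⌋ : ℤ) : ℝ)))) volume 0 t)
    (hintψ : ∀ t : ℝ, 0 ≤ t →
      IntervalIntegrable (fun s => U t s (f s (ψ ((⌊s⌋ : ℤ) : ℝ)))) volume 0 t)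
    (C : ℝ) (hC : ∀ s : ℝ, 0 ≤ s → ‖φ s - ψ s‖ ≤ C) :
    ∀ t : ℝ, 0 ≤ t →
      ‖(U t 0 c₀ + ∫ s in (0 : ℝ)..t, U t s (f s (φ ((⌊s⌋ : ℤ) : ℝ)))) -
          (U t 0 c₀ + ∫ s in (0 : ℝ)..t, U t s (f s (ψ ((⌊s⌋ : ℤ) : ℝ))))‖ ≤
        L * M / a * C :=
  stmt10_general U M a L hM ha hL hbound f hlip c₀ φ ψ hintφ hintψ C hC
end

section
/- Let f : ℝ≥0 × X → X be uniformly S-asymptotically ω-periodic on bounded sets and globally Lipschitz with constant L in the second variable. If u : ℝ≥0 → X is bounded continuous S-asymptotically ω-periodic, then t ↦ f(t, u(t)) is bounded continuous S-asymptotically ω-periodic. -/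
/-!
Since `u` takes values in a fixed ball `K`, boundedness of `t ↦ f t (u t)` comes from boundedness
of `f` on `[0, ∞) × K`. For the asymptotic periodicity split
`f (t+ω) (u (t+ω)) - f t (u t) = (f (t+ω) (u (t+ω)) - f (t+ω) (u t)) + (f (t+ω) (u t) - f t (u t))`:
the first term is at most `L ‖u (t+ω) - u t‖` by the Lipschitz bound, the second tends to zero
uniformly on `K`.
-/

open Filter Topology

theorem tendsto_sub_apply_of_lipschitz_of_uniform {ι X : Type*} [SeminormedAddCommGroup X]
    {l : Filter ι} {F G : ι → X → X} {v w : ι → X} {K : Set X} {L : ℝ}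
    (hlip : ∀ᶠ i in l, ∀ x y, ‖F i x - F i y‖ ≤ L * ‖x - y‖)
    (hunif : ∀ ε > 0, ∀ᶠ i in l, ∀ x ∈ K, ‖F i x - G i x‖ ≤ ε)
    (hwK : ∀ᶠ i in l, w i ∈ K)
    (hvw : Tendsto (fun i => v i - w i) l (𝓝 0)) :
    Tendsto (fun i => F i (v i) - G i (w i)) l (𝓝 0) := by
  have hF : Tendsto (fun i => F i (v i) - F i (w i)) l (𝓝 0) := by
    refine squeeze_zero_norm' (hlip.mono fun i hi => hi _ _) ?_
    simpa using hvw.norm.const_mul L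
  have hFG : Tendsto (fun i => F i (w i) - G i (w i)) l (𝓝 0) := by
    refine NormedAddGroup.tendsto_nhds_zero.2 fun ε hε => ?_
    filter_upwards [hunif (ε / 2) (half_pos hε), hwK] with i hi hwi
    exact (hi _ hwi).trans_lt (half_lt_self hε)
  simpa using hF.add hFG

theorem stmt14_general {X : Type*} [NormedAddCommGroup X]
    (f : ℝ → X → X) (ω : ℝ) (L : ℝ)
    (hfcont : Continuous (fun q : ℝ × X => f q.1 q.2))
    (husap : ∀ K : Set X, Bornology.IsBounded K →
      (∃ C : ℝ, ∀ t : ℝ, 0 ≤ t → ∀ x ∈ K, ‖f t x‖ ≤ C) ∧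
      (∀ ε > (0 : ℝ), ∃ T : ℝ, ∀ t ≥ T, ∀ x ∈ K, ‖f (t + ω) x - f t x‖ ≤ ε))
    (hlip : ∀ t : ℝ, 0 ≤ t → ∀ x y : X, ‖f t x - f t y‖ ≤ L * ‖x - y‖)
    (u : ℝ → X)
    (hbdd : ∃ C : ℝ, ∀ t : ℝ, 0 ≤ t → ‖u t‖ ≤ C)
    (hcont : ContinuousOn u (Set.Ici (0 : ℝ)))
    (hsap : Tendsto (fun t : ℝ => u (t + ω) - u t) atTop (nhds 0)) :
    (∃ C : ℝ, ∀ t : ℝ, 0 ≤ t → ‖f t (u t)‖ ≤ C) ∧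
    ContinuousOn (fun t : ℝ => f t (u t)) (Set.Ici (0 : ℝ)) ∧
    Tendsto (fun t : ℝ => f (t + ω) (u (t + ω)) - f t (u t)) atTop (nhds 0) := by
  obtain ⟨C, hC⟩ := hbdd
  obtain ⟨⟨M, hM⟩, hper⟩ := husap _ (Metric.isBounded_closedBall (x := 0) (r := C))
  have hu_ball : ∀ t, 0 ≤ t → u t ∈ Metric.closedBall 0 C := by simpa using hC
  refine ⟨⟨M, fun t ht => hM t ht _ (hu_ball t ht)⟩,
    hfcont.comp_continuousOn (continuousOn_id.prodMk hcont), ?_⟩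
  refine tendsto_sub_apply_of_lipschitz_of_uniform (K := Metric.closedBall 0 C) (L := L) ?_ (fun ε hε => ?_) ?_ hsap
  · filter_upwards [eventually_ge_atTop (-ω)] with t ht using hlip _ (by linarith)
  · obtain ⟨T, hT⟩ := hper ε hε
    filter_upwards [eventually_ge_atTop T] with t ht using hT t ht
  · filter_upwards [eventually_ge_atTop 0] with t ht using hu_ball t ht

theorem stmt14 {X : Type*} [NormedAddCommGroup X] [NormedSpace ℝ X] [CompleteSpace X]
    (f : ℝ → X → X) (ω : ℝ) (hω : 0 < ω) (L : ℝ) (hL : 0 < L)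
    (hfcont : Continuous (fun q : ℝ × X => f q.1 q.2))
    (husap : ∀ K : Set X, Bornology.IsBounded K →
      (∃ C : ℝ, ∀ t : ℝ, 0 ≤ t → ∀ x ∈ K, ‖f t x‖ ≤ C) ∧
      (∀ ε > (0 : ℝ), ∃ T : ℝ, ∀ t ≥ T, ∀ x ∈ K, ‖f (t + ω) x - f t x‖ ≤ ε))
    (hlip : ∀ t : ℝ, 0 ≤ t → ∀ x y : X, ‖f t x - f t y‖ ≤ L * ‖x - y‖)
    (u : ℝ → X)
    (hbdd : ∃ C : ℝ, ∀ t : ℝ, 0 ≤ t → ‖u t‖ ≤ C)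
    (hcont : ContinuousOn u (Set.Ici (0 : ℝ)))
    (hsap : Tendsto (fun t : ℝ => u (t + ω) - u t) atTop (nhds 0)) :
    (∃ C : ℝ, ∀ t : ℝ, 0 ≤ t → ‖f t (u t)‖ ≤ C) ∧
    ContinuousOn (fun t : ℝ => f t (u t)) (Set.Ici (0 : ℝ)) ∧
    Tendsto (fun t : ℝ => f (t + ω) (u (t + ω)) - f t (u t)) atTop (nhds 0) :=
  stmt14_general f ω L hfcont husap hlip u hbdd hcont hsap
end

section
/- Let (U(t,s))_{t≥s≥0} satisfy ‖U(t,s)‖ ≤ M e^{-a(t-s)} with M, a > 0, and let g ∈ BS^p(ℝ≥0, ℝ≥0) for p ≥ 1. Then for any t ∈ [n, n+1] with n ∈ ℕ: ∫_0^t e^{-a(t-s)} g(s) ds ≤ (Σ_{k=0}^{n-1} e^{-a(n-k-1)} (∫_k^{k+1} g(s)^p ds)^{1/p}) + (∫_n^{n+1} g(s)^p ds)^{1/p} ≤ ((2-e^{-a})/(1-e^{-a})) ‖g‖_{S^p}. -/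
/-!
On each unit interval `[k, k + 1] ⊆ [0, n]` the weight `exp (-a (t - s))` is at most
`exp (-a (n - k - 1))`, and on the last piece `[n, t]` it is at most `1`. Jensen's inequality for
`x ↦ x ^ p` on the unit interval (a probability space) bounds `∫ g` by `(∫ g ^ p) ^ (1 / p)` there.
Bounding every such block by `‖g‖_{S^p}` leaves the geometric series
`∑ exp (-a j) ≤ 1 / (1 - exp (-a))`, and `1 / (1 - r) + 1 = (2 - r) / (1 - r)`.
-/

open MeasureTheory Set

theorem IntervalIntegrable.mono_of_le_of_le {E : Type*} [NormedAddCommGroup E] {f : ℝ → E}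
    {μ : Measure ℝ} {a b u v : ℝ} (hf : IntervalIntegrable f μ a b) (hau : a ≤ u) (huv : u ≤ v)
    (hvb : v ≤ b) : IntervalIntegrable f μ u v :=
  hf.mono_set (uIcc_subset_uIcc (mem_uIcc_of_le hau (huv.trans hvb))
    (mem_uIcc_of_le (hau.trans huv) hvb))

theorem integral_le_rpow_integral_rpow {α : Type*} [MeasurableSpace α] {μ : Measure α}
    [IsProbabilityMeasure μ] {p : ℝ} (hp : 1 ≤ p) {g : α → ℝ} (hg0 : 0 ≤ᵐ[μ] g)
    (hg : Integrable g μ) (hgp : Integrable (fun x => g x ^ p) μ) :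
    ∫ x, g x ∂μ ≤ (∫ x, g x ^ p ∂μ) ^ (1 / p) := by
  have hp0 : 0 < p := by linarith
  have hint0 : 0 ≤ ∫ x, g x ∂μ := integral_nonneg_of_ae hg0
  have jensen : (∫ x, g x ∂μ) ^ p ≤ ∫ x, g x ^ p ∂μ :=
    (convexOn_rpow hp).map_integral_le (Real.continuous_rpow_const hp0.le).continuousOn
      isClosed_Ici hg0 hg hgp
  calc ∫ x, g x ∂μ = ((∫ x, g x ∂μ) ^ p) ^ (1 / p) := by
        rw [← Real.rpow_mul hint0, mul_one_div_cancel hp0.ne', Real.rpow_one]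
    _ ≤ _ := Real.rpow_le_rpow (Real.rpow_nonneg hint0 _) jensen (by positivity)

theorem intervalIntegral_le_rpow_intervalIntegral_rpow {p : ℝ} (hp : 1 ≤ p) {g : ℝ → ℝ}
    (hg0 : ∀ s, 0 ≤ g s) {c : ℝ} (hg : IntervalIntegrable g volume c (c + 1))
    (hgp : IntervalIntegrable (fun s => g s ^ p) volume c (c + 1)) :
    ∫ s in c..c + 1, g s ≤ (∫ s in c..c + 1, g s ^ p) ^ (1 / p) := by
  have hc : c ≤ c + 1 := by linarith
  have : IsProbabilityMeasure (volume.restrict (Ioc c (c + 1))) := ⟨by simp [Real.volume_Ioc]⟩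
  rw [intervalIntegral.integral_of_le hc, intervalIntegral.integral_of_le hc]
  exact integral_le_rpow_integral_rpow hp (ae_of_all _ hg0) hg.1 hgp.1

theorem intervalIntegral_exp_mul_le {a d t u v : ℝ} (ha : 0 ≤ a) (huv : u ≤ v) (hd : d ≤ t - v)
    {g : ℝ → ℝ} (hg0 : ∀ s, 0 ≤ g s) (hg : IntervalIntegrable g volume u v) :
    ∫ s in u..v, Real.exp (-a * (t - s)) * g s ≤ Real.exp (-a * d) * ∫ s in u..v, g s := by
  rw [← intervalIntegral.integral_const_mul]
  refine intervalIntegral.integral_mono_on huv (hg.continuousOn_mul (by fun_prop))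
    (hg.const_mul _) fun s hs => ?_
  exact mul_le_mul_of_nonneg_right (Real.exp_le_exp.2 (by nlinarith [hs.2])) (hg0 s)

theorem intervalIntegral_eq_sum_unit_add {E : Type*} [NormedAddCommGroup E] [NormedSpace ℝ E]
    {f : ℝ → E} {n : ℕ} {t : ℝ} (hnt : (n : ℝ) ≤ t) (hf : IntervalIntegrable f volume 0 t) :
    ∫ s in (0 : ℝ)..t, f s =
      ∑ k ∈ Finset.range n, (∫ s in (k : ℝ)..(k + 1), f s) + ∫ s in (n : ℝ)..t, f s := by
  have hsum := intervalIntegral.sum_integral_adjacent_intervals (a := fun k : ℕ => (k : ℝ))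
    (n := n) fun k hk => hf.mono_of_le_of_le k.cast_nonneg (by simp) (by
      have : ((k + 1 : ℕ) : ℝ) ≤ n := by exact_mod_cast hk
      linarith)
  push_cast at hsum
  rw [hsum, intervalIntegral.integral_add_adjacent_intervals
    (hf.mono_of_le_of_le le_rfl n.cast_nonneg hnt) (hf.mono_of_le_of_le n.cast_nonneg hnt le_rfl)]

theorem intervalIntegral_exp_mul_le_sum_rpow {a p : ℝ} (ha : 0 ≤ a) (hp : 1 ≤ p) {g : ℝ → ℝ}
    (hg0 : ∀ s, 0 ≤ g s) {n : ℕ} {t : ℝ} (hnt : (n : ℝ) ≤ t) (htn : t ≤ n + 1)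
    (hg : IntervalIntegrable g volume 0 (n + 1))
    (hgp : ∀ k : ℕ, k ≤ n → IntervalIntegrable (fun s => g s ^ p) volume k (k + 1)) :
    ∫ s in (0 : ℝ)..t, Real.exp (-a * (t - s)) * g s ≤
      ∑ k ∈ Finset.range n, Real.exp (-a * ((n : ℝ) - k - 1)) *
          (∫ s in (k : ℝ)..(k + 1), g s ^ p) ^ (1 / p) +
        (∫ s in (n : ℝ)..(n + 1), g s ^ p) ^ (1 / p) := by
  have hunit : ∀ k : ℕ, k ≤ n → IntervalIntegrable g volume k (k + 1) := fun k hk =>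
    hg.mono_of_le_of_le k.cast_nonneg (by linarith) (by exact_mod_cast Nat.add_le_add_right hk 1)
  rw [intervalIntegral_eq_sum_unit_add hnt
    ((hg.mono_of_le_of_le le_rfl (n.cast_nonneg.trans hnt) htn).continuousOn_mul (by fun_prop))]
  gcongr with k hk
  · have hkn : k < n := Finset.mem_range.1 hk
    have hkn' : (k : ℝ) + 1 ≤ n := by exact_mod_cast hkn
    refine (intervalIntegral_exp_mul_le (d := n - k - 1) ha (by linarith) (by linarith) hg0
      (hunit k hkn.le)).trans ?_
    gcongr
    exact intervalIntegral_le_rpow_intervalIntegral_rpow hp hg0 (hunit k hkn.le) (hgp k hkn.le)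
  · calc ∫ s in (n : ℝ)..t, Real.exp (-a * (t - s)) * g s
        ≤ Real.exp (-a * 0) * ∫ s in (n : ℝ)..t, g s :=
          intervalIntegral_exp_mul_le ha hnt (by linarith) hg0
            (hg.mono_of_le_of_le n.cast_nonneg hnt htn)
      _ ≤ ∫ s in (n : ℝ)..(n + 1), g s := by
          rw [mul_zero, Real.exp_zero, one_mul]
          exact intervalIntegral.integral_mono_interval le_rfl hnt htn (ae_of_all _ hg0)
            (hunit n le_rfl)
      _ ≤ _ := intervalIntegral_le_rpow_intervalIntegral_rpow hp hg0 (hunit n le_rfl)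
            (hgp n le_rfl)

theorem sum_range_exp_neg_mul_le {a : ℝ} (ha : 0 < a) (n : ℕ) :
    ∑ k ∈ Finset.range n, Real.exp (-a * ((n : ℝ) - k - 1)) ≤ 1 / (1 - Real.exp (-a)) := by
  have hterm : ∀ k ∈ Finset.range n,
      Real.exp (-a * ((n : ℝ) - k - 1)) = Real.exp (-a) ^ (n - 1 - k) := by
    intro k hk
    have hkn := Finset.mem_range.1 hk
    rw [← Real.exp_nat_mul, Nat.cast_sub (by omega), Nat.cast_sub (by omega)]
    push_cast
    ring_nf
  rw [Finset.sum_congr rfl hterm, Finset.sum_range_reflect (Real.exp (-a) ^ ·) n,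
    Finset.range_eq_Ico]
  simpa using geom_sum_Ico_le_of_lt_one (Real.exp_pos _).le (Real.exp_lt_one_iff.2 (by linarith))
    (m := 0) (n := n)

theorem sum_exp_neg_mul_add_le {a S : ℝ} (ha : 0 < a) (hS : 0 ≤ S) (n : ℕ) {b : ℕ → ℝ}
    (hb : ∀ k ≤ n, b k ≤ S) :
    ∑ k ∈ Finset.range n, Real.exp (-a * ((n : ℝ) - k - 1)) * b k + b n ≤
      (2 - Real.exp (-a)) / (1 - Real.exp (-a)) * S := by
  have hr : 0 < 1 - Real.exp (-a) := sub_pos.2 (Real.exp_lt_one_iff.2 (by linarith))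
  calc ∑ k ∈ Finset.range n, Real.exp (-a * ((n : ℝ) - k - 1)) * b k + b n
      ≤ (∑ k ∈ Finset.range n, Real.exp (-a * ((n : ℝ) - k - 1))) * S + S := by
        rw [Finset.sum_mul]
        gcongr with k hk
        · exact hb k (Finset.mem_range.1 hk).le
        · exact hb n le_rfl
    _ ≤ 1 / (1 - Real.exp (-a)) * S + S := by gcongr; exact sum_range_exp_neg_mul_le ha n
    _ = (2 - Real.exp (-a)) / (1 - Real.exp (-a)) * S := by field_simp; ring

theorem stmt19_general
    (a : ℝ) (ha : 0 < a)
    (p : ℝ) (hp : 1 ≤ p) (g : ℝ → ℝ) (hg0 : ∀ s : ℝ, 0 ≤ g s)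
    (hgint : ∀ t : ℝ, 0 ≤ t → IntervalIntegrable g volume 0 t)
    (hgpint : ∀ t : ℝ, 0 ≤ t → IntervalIntegrable (fun s => g s ^ p) volume t (t + 1))
    (Sg : ℝ) (hSg : ∀ t : ℝ, 0 ≤ t → (∫ s in t..(t + 1), g s ^ p) ^ (1 / p) ≤ Sg) :
    ∀ n : ℕ, ∀ t : ℝ, (n : ℝ) ≤ t → t ≤ (n : ℝ) + 1 →
      (∫ s in (0 : ℝ)..t, Real.exp (-a * (t - s)) * g s) ≤
        ((∑ k ∈ Finset.range n,
            Real.exp (-a * ((n : ℝ) - (k : ℝ) - 1)) *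
              (∫ s in (k : ℝ)..((k : ℝ) + 1), g s ^ p) ^ (1 / p)) +
          (∫ s in (n : ℝ)..((n : ℝ) + 1), g s ^ p) ^ (1 / p)) ∧
      ((∑ k ∈ Finset.range n,
            Real.exp (-a * ((n : ℝ) - (k : ℝ) - 1)) *
              (∫ s in (k : ℝ)..((k : ℝ) + 1), g s ^ p) ^ (1 / p)) +
          (∫ s in (n : ℝ)..((n : ℝ) + 1), g s ^ p) ^ (1 / p)) ≤
        (2 - Real.exp (-a)) / (1 - Real.exp (-a)) * Sg := by
  intro n t hnt htn
  have hSg0 : 0 ≤ Sg := (Real.rpow_nonneg (intervalIntegral.integral_nonneg (by norm_num)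
    fun s _ => Real.rpow_nonneg (hg0 s) p) _).trans (hSg 0 le_rfl)
  exact ⟨intervalIntegral_exp_mul_le_sum_rpow ha.le hp hg0 hnt htn (hgint _ (by positivity))
      fun k _ => hgpint k k.cast_nonneg,
    sum_exp_neg_mul_add_le ha hSg0 n fun k _ => hSg k k.cast_nonneg⟩

theorem stmt19 {X : Type*} [NormedAddCommGroup X] [NormedSpace ℝ X] [CompleteSpace X]
    (U : ℝ → ℝ → X →L[ℝ] X) (M a : ℝ) (hM : 0 < M) (ha : 0 < a)
    (hbound : ∀ t s : ℝ, 0 ≤ s → s ≤ t → ‖U t s‖ ≤ M * Real.exp (-a * (t - s)))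
    (p : ℝ) (hp : 1 ≤ p) (g : ℝ → ℝ) (hg0 : ∀ s : ℝ, 0 ≤ g s)
    (hgmeas : Measurable g)
    (hgint : ∀ t : ℝ, 0 ≤ t → IntervalIntegrable g volume 0 t)
    (hgpint : ∀ t : ℝ, 0 ≤ t → IntervalIntegrable (fun s => g s ^ p) volume t (t + 1))
    (Sg : ℝ) (hSg : ∀ t : ℝ, 0 ≤ t → (∫ s in t..(t + 1), g s ^ p) ^ (1 / p) ≤ Sg) :
    ∀ n : ℕ, ∀ t : ℝ, (n : ℝ) ≤ t → t ≤ (n : ℝ) + 1 →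
      (∫ s in (0 : ℝ)..t, Real.exp (-a * (t - s)) * g s) ≤
        ((∑ k ∈ Finset.range n,
            Real.exp (-a * ((n : ℝ) - (k : ℝ) - 1)) *
              (∫ s in (k : ℝ)..((k : ℝ) + 1), g s ^ p) ^ (1 / p)) +
          (∫ s in (n : ℝ)..((n : ℝ) + 1), g s ^ p) ^ (1 / p)) ∧
      ((∑ k ∈ Finset.range n,
            Real.exp (-a * ((n : ℝ) - (k : ℝ) - 1)) *
              (∫ s in (k : ℝ)..((k : ℝ) + 1), g s ^ p) ^ (1 / p)) +
          (∫ s in (n : ℝ)..((n : ℝ) + 1), g s ^ p) ^ (1 / p)) ≤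
        (2 - Real.exp (-a)) / (1 - Real.exp (-a)) * Sg :=
  stmt19_general a ha p hp g hg0 hgint hgpint Sg hSg
end
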